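/- Let G be a graph on n vertices, and let G' be the disjoint union of: (i) G with p−3 added universal clique vertices, (ii) one copy of every graph on exactly p vertices, and (iii) enough isolated vertices so that |V(G')| = 3n, where p = ⌈√(log₂(3n))⌉ ≥ 4. Then: G is 3-colourable if and only if (G' is p-colourable or G' is H-free for some graph H with |V(H)| ≤ p). -/
import Mathlib


open SimpleGraph

/-- The graph obtained from `G` by adding a clique of `k` new universal vertices,
each adjacent to every vertex of `G`. -/
def addClique {V : Type*} (G : SimpleGraph V) (k : ℕ) : SimpleGraph (V ⊕ Fin k) :=
  SimpleGraph.fromRel (fun a b =>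
    match a, b with
    | Sum.inl u, Sum.inl v => G.Adj u v
    | Sum.inl _, Sum.inr _ => True
    | Sum.inr _, Sum.inr _ => True
    | _, _ => False)

/-- The disjoint union of one copy of every simple graph on exactly `p` labelled
vertices: `(H, i)` is adjacent to `(H', j)` iff `H = H'` and `H.Adj i j`. -/
def allGraphs (p : ℕ) : SimpleGraph (SimpleGraph (Fin p) × Fin p) :=
  SimpleGraph.fromRel (fun a b => a.1 = b.1 ∧ a.1.Adj a.2 b.2)

/-- Let `G` be a graph on `n` vertices and let `G'` be the disjoint union of
(i) `G` with `p - 3` added universal clique vertices, (ii) one copy of every graph on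
exactly `p` vertices, and (iii) `s` isolated vertices making `|V(G')| = 3n`, where
`p = ⌈√(log₂ (3n))⌉ ≥ 4`. Then `G` is `3`-colourable iff (`G'` is `p`-colourable or
`G'` is `H`-free for some graph `H` with at most `p` vertices). -/
theorem colouring_or_subgraph_reduction (n p s : ℕ) (hn : 1 ≤ n)
    (G : SimpleGraph (Fin n))
    (hp : p = ⌈Real.sqrt (Real.logb 2 (3 * (n : ℝ)))⌉₊) (hp4 : 4 ≤ p)
    (hcard :
      Fintype.card (((Fin n ⊕ Fin (p - 3)) ⊕ (SimpleGraph (Fin p) × Fin p)) ⊕ Fin s)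
        = 3 * n) :
    G.Colorable 3 ↔
      ((addClique G (p - 3) ⊕g allGraphs p ⊕g (⊥ : SimpleGraph (Fin s))).Colorable p ∨
        ∃ (q : ℕ) (H : SimpleGraph (Fin q)), q ≤ p ∧
          IsEmpty (H ↪g (addClique G (p - 3) ⊕g allGraphs p ⊕g (⊥ : SimpleGraph (Fin s))))) := by
  have h3p : 3 ≤ p := by omega
  constructor
  · rintro ⟨g⟩
    left
    refine ⟨SimpleGraph.Coloring.mk (fun x =>
      match x with
      | Sum.inl (Sum.inl (Sum.inl v)) => Fin.castLE h3p (g v)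
      | Sum.inl (Sum.inl (Sum.inr j)) => ⟨3 + j.val, by have := j.isLt; omega⟩
      | Sum.inl (Sum.inr Hi) => Hi.2
      | Sum.inr _ => ⟨0, by omega⟩) ?_⟩
    rintro (((u | u) | ⟨H, i⟩) | u) (((v | v) | ⟨H', i'⟩) | v) hadj <;>
      simp only [SimpleGraph.sum_adj, addClique, allGraphs, SimpleGraph.fromRel_adj, SimpleGraph.bot_adj] at hadj
    · -- inl inl vs inl inl in G
      have huv : g u ≠ g v := by
        rcases hadj.2 with h | h
        · exact g.valid h
        · exact fun e => g.valid h e.symm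
      simp only [ne_eq]
      intro e
      exact huv (Fin.castLE_injective h3p e)
    · -- G vertex vs clique vertex
      have := (g u).isLt
      simp only [ne_eq, Fin.ext_iff, Fin.coe_castLE]
      omega
    · have := (g v).isLt
      simp only [ne_eq, Fin.ext_iff, Fin.coe_castLE]
      omega
    · -- clique vs clique
      have huv : u ≠ v := fun e => hadj.1 (by rw [e])
      simp only [ne_eq, Fin.ext_iff]
      have : u.val ≠ v.val := fun e => huv (Fin.ext e)
      omega
    · -- allGraphs
      rcases hadj.2 with ⟨_, h⟩ | ⟨_, h⟩
      · exact h.ne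
      · exact h.ne'
  · rintro (hcol | ⟨q, H, hq, hEmpty⟩)
    · -- extract a 3-colouring
      obtain ⟨c⟩ := hcol
      let k : Fin (p - 3) → Fin p := fun j => c (Sum.inl (Sum.inl (Sum.inr j)))
      have hkinj : Function.Injective k := by
        intro i j hij
        by_contra hne
        refine c.valid ?_ hij
        simp only [SimpleGraph.sum_adj, addClique, SimpleGraph.fromRel_adj]
        exact ⟨by simpa using hne, Or.inl trivial⟩
      let T : Finset (Fin p) := (Finset.univ.image k)ᶜ
      have hT : T.card = 3 := by
        have : (Finset.univ.image k).card = p - 3 := by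
          rw [Finset.card_image_of_injective _ hkinj, Finset.card_univ, Fintype.card_fin]
        rw [Finset.card_compl, this, Fintype.card_fin]
        omega
      have hmem : ∀ v : Fin n, c (Sum.inl (Sum.inl (Sum.inl v))) ∈ T := by
        intro v
        simp only [T, Finset.mem_compl, Finset.mem_image, Finset.mem_univ, true_and, not_exists]
        intro j hj
        refine c.valid ?_ hj.symm
        simp only [SimpleGraph.sum_adj, addClique, SimpleGraph.fromRel_adj]
        exact ⟨by simp, Or.inl trivial⟩
      have col : G.Coloring ↥T := SimpleGraph.Coloring.mk
        (fun v => ⟨c (Sum.inl (Sum.inl (Sum.inl v))), hmem v⟩) ?_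
      · have := col.colorable
        rwa [Fintype.card_coe, hT] at this
      · intro a b hab
        simp only [ne_eq, Subtype.mk.injEq]
        refine c.valid ?_
        simp only [SimpleGraph.sum_adj, addClique, SimpleGraph.fromRel_adj]
        exact ⟨by simpa using hab.ne, Or.inl hab⟩
    · -- the H-free disjunct is impossible
      exfalso
      let H' : SimpleGraph (Fin p) := SimpleGraph.map (Fin.castLEEmb hq) H
      refine hEmpty.false ⟨⟨fun v => Sum.inl (Sum.inr (H', Fin.castLE hq v)), ?_⟩, ?_⟩
      · intro a b hab
        simp only [Sum.inl.injEq, Sum.inr.injEq, Prod.mk.injEq] at hab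
        exact Fin.castLE_injective hq hab.2
      · intro a b
        simp only [Function.Embedding.coeFn_mk, SimpleGraph.sum_adj, allGraphs,
          SimpleGraph.fromRel_adj]
        constructor
        · rintro ⟨hne, ⟨-, h⟩ | ⟨-, h⟩⟩
          · exact SimpleGraph.map_adj_apply.mp h
          · exact (SimpleGraph.map_adj_apply.mp h).symm
        · intro h
          refine ⟨?_, Or.inl ⟨by trivial, SimpleGraph.map_adj_apply.mpr h⟩⟩
          simp only [ne_eq, Prod.mk.injEq, not_and]
          intro _
          exact fun e => h.ne (Fin.castLE_injective hq e)
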